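/- arXiv:math/9510211 — 7 statements merged into one kernel-verified Lean document; each statement's English description precedes it below -/
import Mathlib

section
/- Let (a_n) be a sequence of real numbers with a_n ∈ [-1,1] for all n. If lim_{n→∞} (1 + a_n)(1 - a_{n+1}) = 0, then either lim_{n→∞} a_n = 1 or lim_{n→∞} a_n = -1. -/
open Filter

theorem stmt0 (a : ℕ → ℝ) (ha : ∀ n, a n ∈ Set.Icc (-1 : ℝ) 1)
    (h : Tendsto (fun n => (1 + a n) * (1 - a (n + 1))) atTop (nhds 0)) :
    Tendsto a atTop (nhds 1) ∨ Tendsto a atTop (nhds (-1)) := by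
  by_contra hc
  push_neg at hc
  obtain ⟨h1, h2⟩ := hc
  rw [Metric.tendsto_atTop] at h1 h2
  push_neg at h1 h2
  obtain ⟨ε, hε, hεn⟩ := h1
  obtain ⟨δ, hδ, hδn⟩ := h2
  set η : ℝ := min (min ε δ) 1 / 2 with hηdef
  have hη0 : 0 < η := by
    have : 0 < min (min ε δ) 1 := lt_min (lt_min hε hδ) one_pos
    positivity
  have hηε : 2 * η ≤ ε := by
    have : min (min ε δ) 1 ≤ ε := le_trans (min_le_left _ _) (min_le_left _ _)
    simp only [hηdef]; linarith
  have hηδ : 2 * η ≤ δ := by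
    have : min (min ε δ) 1 ≤ δ := le_trans (min_le_left _ _) (min_le_right _ _)
    simp only [hηdef]; linarith
  have hη1 : η ≤ 1 / 2 := by
    have : min (min ε δ) 1 ≤ 1 := min_le_right _ _
    simp only [hηdef]; linarith
  rw [Metric.tendsto_atTop] at h
  obtain ⟨N, hN⟩ := h (η ^ 2) (by positivity)
  -- dichotomy
  have dich : ∀ n, N ≤ n → a n < -1 + η ∨ 1 - η < a (n + 1) := by
    intro n hn
    by_contra hcon
    push_neg at hcon
    obtain ⟨hl, hr⟩ := hcon
    have habs := hN n hn
    rw [Real.dist_eq, sub_zero] at habs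
    have h1 : η ≤ 1 + a n := by linarith
    have h2 : η ≤ 1 - a (n + 1) := by linarith
    have hp : η ^ 2 ≤ (1 + a n) * (1 - a (n + 1)) := by nlinarith
    nlinarith [le_abs_self ((1 + a n) * (1 - a (n + 1)))]
  -- propagation
  have claim : ∀ d k, N ≤ k → a (k + d + 1) ≤ 1 - η → a k < -1 + η := by
    intro d
    induction d with
    | zero =>
      intro k hk hhigh
      rcases dich k hk with hlow | hhi
      · exact hlow
      · simp at hhigh; linarith
    | succ d ih =>
      intro k hk hhigh
      have hk1 : a (k + 1) < -1 + η := by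
        apply ih (k + 1) (le_trans hk (Nat.le_succ k))
        have : k + 1 + d + 1 = k + (d + 1) + 1 := by ring
        rw [this]; exact hhigh
      rcases dich k hk with hlow | hhi
      · exact hlow
      · linarith
  -- pick witnesses
  obtain ⟨m, hm, hmd⟩ := hδn N
  obtain ⟨n, hn, hnd⟩ := hεn (m + 1)
  have ham : -1 ≤ a m := (ha m).1
  have han : a n ≤ 1 := (ha n).2
  rw [Real.dist_eq] at hmd hnd
  have hmd' : -1 + δ ≤ a m := by
    rcases abs_cases (a m - -1) with ⟨he, _⟩ | ⟨he, _⟩ <;> rw [he] at hmd <;> linarith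
  have hnd' : a n ≤ 1 - ε := by
    rcases abs_cases (a n - 1) with ⟨he, _⟩ | ⟨he, _⟩ <;> rw [he] at hnd <;> linarith
  have hd : m + (n - m - 1) + 1 = n := by omega
  have := claim (n - m - 1) m hm (by rw [hd]; linarith)
  linarith
end

section
/- Let (a_n) be a sequence of real numbers with a_n ∈ [-1,1] for all n. Then lim_{n→∞} a_n·a_{n+1} = 1 if and only if lim_{n→∞} (1 + a_n)(1 - a_{n+1}) = 0. -/
open Filter

theorem stmt1 (a : ℕ → ℝ) (ha : ∀ n, a n ∈ Set.Icc (-1 : ℝ) 1) :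
    Tendsto (fun n => a n * a (n + 1)) atTop (nhds 1) ↔
      Tendsto (fun n => (1 + a n) * (1 - a (n + 1))) atTop (nhds 0) := by
  have h1 : ∀ n, -1 ≤ a n := fun n => (ha n).1
  have h2 : ∀ n, a n ≤ 1 := fun n => (ha n).2
  set b : ℕ → ℝ := fun n => (1 + a n) * (1 - a (n + 1)) with hbdef
  set c : ℕ → ℝ := fun n => (1 - a n) * (1 + a (n + 1)) with hcdef
  have hb0 : ∀ n, 0 ≤ b n := fun n => mul_nonneg (by linarith [h1 n]) (by linarith [h2 (n+1)])
  have hc0 : ∀ n, 0 ≤ c n := fun n => mul_nonneg (by linarith [h2 n]) (by linarith [h1 (n+1)])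
  constructor
  · intro h
    have hs : Tendsto (fun n => 2 - 2 * (a n * a (n + 1))) atTop (nhds 0) := by
      have := ((tendsto_const_nhds : Tendsto (fun _ : ℕ => (2:ℝ)) atTop (nhds 2)).sub (h.const_mul 2))
      simpa using this
    refine tendsto_of_tendsto_of_tendsto_of_le_of_le tendsto_const_nhds hs hb0 ?_
    intro n
    have := hc0 n
    simp only [hbdef, hcdef] at this ⊢
    nlinarith
  · intro h
    have hcten : Tendsto c atTop (nhds 0) := by
      rw [NormedAddCommGroup.tendsto_nhds_zero]
      intro ε hε
      set η : ℝ := min (ε / 2) (1 / 2) with hηdef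
      have hη0 : 0 < η := by positivity
      have hη1 : η ≤ 1 / 2 := min_le_right _ _
      have hηε : 2 * η ≤ ε := by
        have := min_le_left (ε / 2) (1 / 2); linarith
      have hb' : ∀ᶠ n in atTop, b n < η ^ 2 := by
        have := (NormedAddCommGroup.tendsto_nhds_zero.mp h) (η ^ 2) (by positivity)
        filter_upwards [this] with n hn
        have : |b n| < η ^ 2 := by simpa using hn
        calc b n ≤ |b n| := le_abs_self _
          _ < η ^ 2 := this
      rw [eventually_atTop] at hb'
      obtain ⟨N, hN⟩ := hb'
      by_cases hcase : ∀ n ≥ N, 1 + a n < η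
      · filter_upwards [eventually_ge_atTop N] with n hn
        have ha1 : 1 + a (n + 1) < η := hcase (n + 1) (le_trans hn (Nat.le_succ n))
        have h3 := h1 (n + 1)
        have h4 := h2 n
        have h5 := h1 n
        rw [Real.norm_eq_abs, abs_of_nonneg (hc0 n)]
        simp only [hcdef]
        nlinarith
      · push_neg at hcase
        obtain ⟨n₀, hn₀N, hn₀⟩ := hcase
        have key : ∀ m : ℕ, 1 - a (n₀ + 1 + m) < η := by
          intro m
          induction m with
          | zero =>
            have hbn := hN n₀ hn₀N
            have h3 := h2 (n₀ + 1)
            simp only [hbdef] at hbn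
            simp only [Nat.add_zero]
            nlinarith
          | succ k ih =>
            have hbn := hN (n₀ + 1 + k) (by omega)
            simp only [hbdef] at hbn
            have h3 : 1 + a (n₀ + 1 + k) > 3 / 2 := by linarith
            have h4 := h2 (n₀ + 1 + k + 1)
            have : 1 - a (n₀ + 1 + k + 1) < η := by nlinarith
            have heq : n₀ + 1 + (k + 1) = n₀ + 1 + k + 1 := by omega
            rw [heq]
            exact this
        filter_upwards [eventually_ge_atTop (n₀ + 1)] with n hn
        obtain ⟨m, rfl⟩ := Nat.exists_eq_add_of_le hn
        have hA := key m
        have h3 := h1 (n₀ + 1 + m)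
        have h4 := h2 (n₀ + 1 + m + 1)
        have h5 := h1 (n₀ + 1 + m + 1)
        rw [Real.norm_eq_abs, abs_of_nonneg (hc0 _)]
        simp only [hcdef]
        have hmul : (1 - a (n₀ + 1 + m)) * (1 + a (n₀ + 1 + m + 1)) ≤ (1 - a (n₀ + 1 + m)) * 2 :=
          mul_le_mul_of_nonneg_left (by linarith) (by linarith [h2 (n₀ + 1 + m)])
        nlinarith
    have hs : Tendsto (fun n => 1 - (b n + c n) / 2) atTop (nhds 1) := by
      have := ((tendsto_const_nhds : Tendsto (fun _ : ℕ => (1:ℝ)) atTop (nhds 1)).sub ((h.add hcten).div_const 2))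
      simpa using this
    have heq : (fun n => a n * a (n + 1)) = fun n => 1 - (b n + c n) / 2 := by
      funext n
      simp only [hbdef, hcdef]
      ring
    rw [heq]
    exact hs
end

section
/- Let (a_n) be a sequence of real numbers with a_n ∈ [-1,1]. Then lim_{n→∞} a_n·a_{n+1} = 1 holds if and only if either lim a_n = 1 or lim a_n = -1. -/
open Filter

theorem stmt2 (a : ℕ → ℝ) (ha : ∀ n, a n ∈ Set.Icc (-1 : ℝ) 1) :
    Tendsto (fun n => a n * a (n + 1)) atTop (nhds 1) ↔
      (Tendsto a atTop (nhds 1) ∨ Tendsto a atTop (nhds (-1))) := by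
  have habs : ∀ n, |a n| ≤ 1 := fun n => abs_le.mpr ⟨(ha n).1, (ha n).2⟩
  constructor
  · intro h
    have habs_t : Tendsto (fun n => |a n|) atTop (nhds 1) := by
      refine tendsto_of_tendsto_of_tendsto_of_le_of_le h tendsto_const_nhds ?_ ?_
      · intro n
        calc a n * a (n+1) ≤ |a n * a (n+1)| := le_abs_self _
          _ = |a n| * |a (n+1)| := abs_mul _ _
          _ ≤ |a n| * 1 := mul_le_mul_of_nonneg_left (habs _) (abs_nonneg _)
          _ = |a n| := mul_one _
      · intro n; exact habs n
    have hpos : ∀ᶠ n in atTop, 0 < a n * a (n+1) :=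
      h.eventually (eventually_gt_nhds (by norm_num : (0:ℝ) < 1))
    obtain ⟨N, hN⟩ := eventually_atTop.mp hpos
    have hNne : a N ≠ 0 := fun h0 => by simpa [h0] using hN N le_rfl
    rcases hNne.lt_or_gt with hneg | hp
    · right
      have hsign : ∀ n, N ≤ n → a n < 0 := by
        intro n hn
        induction n, hn using Nat.le_induction with
        | base => exact hneg
        | succ n hn ih => nlinarith [hN n hn]
      refine (habs_t.neg.congr' ?_)
      filter_upwards [eventually_ge_atTop N] with n hn
      simp [abs_of_neg (hsign n hn)]
    · left
      have hsign : ∀ n, N ≤ n → 0 < a n := by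
        intro n hn
        induction n, hn using Nat.le_induction with
        | base => exact hp
        | succ n hn ih => nlinarith [hN n hn]
      refine habs_t.congr' ?_
      filter_upwards [eventually_ge_atTop N] with n hn
      simp [abs_of_pos (hsign n hn)]
  · rintro (h | h) <;>
    · have h2 : Tendsto (fun n => a (n+1)) atTop (nhds _) := h.comp (tendsto_add_atTop_nat 1)
      have := h.mul h2
      norm_num at this
      exact this
end

section
/- The sequence Φ_n := (1 - 1/n)·exp(i·log n) (n ≥ 1) of complex numbers is divergent, but satisfies lim_{n→∞} Φ_{n+1}·conj(Φ_n) = 1. -/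
open Filter Complex

/-! If `Φ n → L`, then, since `1 - 1/n → 1`, also `exp (i log n) → L`, a limit of modulus one.
Comparing the terms of index `2n` and `n` gives `L = exp (i log 2) · L`, which is impossible
because `0 < log 2 < 2π`. For the second claim, `Φ (n+1) · conj (Φ n)` equals
`(1 - 1/(n+1)) (1 - 1/n) exp (i (log (n+1) - log n))`, and `log (n+1) - log n → 0`. -/

lemma tendsto_one_sub_one_div_natCast {𝕜 : Type*} [RCLike 𝕜] :
    Tendsto (fun n : ℕ => 1 - 1 / (n : 𝕜)) atTop (nhds 1) := by
  simpa using tendsto_const_nhds.sub (tendsto_one_div_atTop_nhds_zero_nat (𝕜 := 𝕜))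

lemma one_sub_one_div_natCast_ne_zero {𝕜 : Type*} [DivisionRing 𝕜] [CharZero 𝕜] {n : ℕ}
    (hn : n ≠ 1) : 1 - 1 / (n : 𝕜) ≠ 0 := by
  rwa [sub_ne_zero, ne_comm, one_div, ne_eq, inv_eq_one, Nat.cast_eq_one]

lemma exp_I_mul_ofReal_ne_one {θ : ℝ} (h₀ : 0 < θ) (h₂ : θ < 2 * Real.pi) :
    exp (I * θ) ≠ 1 := by
  rw [Ne, exp_eq_one_iff]
  rintro ⟨k, hk⟩
  have hθ : θ = k * (2 * Real.pi) := by
    apply_fun (fun z => z.im) at hk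
    simpa using hk
  have hk₀ : (0 : ℝ) < k := pos_of_mul_pos_left (hθ ▸ h₀) Real.two_pi_pos.le
  have hk₁ : (k : ℝ) < 1 := by nlinarith [Real.pi_pos]
  have : 0 < k := by exact_mod_cast hk₀
  have : k < 1 := by exact_mod_cast hk₁
  omega

lemma exp_I_mul_ofReal_mul_conj (x y : ℝ) :
    exp (I * x) * (starRingEnd ℂ) (exp (I * y)) = exp (I * ↑(x - y)) := by
  rw [← exp_conj, map_mul, conj_I, conj_ofReal, ← exp_add]
  push_cast
  ring_nf

lemma not_tendsto_exp_I_mul_log_natCast (L : ℂ) :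
    ¬ Tendsto (fun n : ℕ => exp (I * Real.log n)) atTop (nhds L) := by
  intro hL
  have hnorm : ‖L‖ = 1 :=
    tendsto_nhds_unique hL.norm (by simpa only [norm_exp_I_mul_ofReal] using tendsto_const_nhds)
  have hdouble : Tendsto (fun n : ℕ => exp (I * Real.log (2 * n : ℕ))) atTop (nhds L) :=
    hL.comp (tendsto_id.const_mul_atTop' two_pos)
  have hrot : Tendsto (fun n : ℕ => exp (I * Real.log (2 * n : ℕ))) atTop
      (nhds (exp (I * Real.log 2) * L)) := by
    refine (hL.const_mul _).congr' ?_
    filter_upwards [eventually_ne_atTop 0] with n hn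
    rw [← exp_add, Nat.cast_mul, Nat.cast_ofNat, Real.log_mul two_ne_zero (by exact_mod_cast hn)]
    push_cast
    ring_nf
  have hfix : exp (I * Real.log 2) * L = L := tendsto_nhds_unique hrot hdouble
  have hL₀ : L ≠ 0 := norm_ne_zero_iff.mp (hnorm ▸ one_ne_zero)
  refine exp_I_mul_ofReal_ne_one (Real.log_pos one_lt_two) ?_ ((mul_eq_right₀ hL₀).mp hfix)
  linarith [Real.log_two_lt_d9, Real.pi_gt_three]

theorem stmt3 :
    (¬ ∃ L : ℂ, Tendsto (fun n : ℕ => (1 - 1 / (n : ℂ)) * Complex.exp (Complex.I * Real.log n))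
        atTop (nhds L)) ∧
    Tendsto (fun n : ℕ =>
        ((1 - 1 / ((n + 1 : ℕ) : ℂ)) * Complex.exp (Complex.I * Real.log (n + 1 : ℕ))) *
          (starRingEnd ℂ) ((1 - 1 / (n : ℂ)) * Complex.exp (Complex.I * Real.log n)))
      atTop (nhds 1) := by
  constructor
  · rintro ⟨L, hL⟩
    apply not_tendsto_exp_I_mul_log_natCast L
    have hquot := hL.div tendsto_one_sub_one_div_natCast one_ne_zero
    rw [div_one] at hquot
    refine hquot.congr' ?_
    filter_upwards [eventually_gt_atTop 1] with n hn
    exact mul_div_cancel_left₀ _ (one_sub_one_div_natCast_ne_zero hn.ne')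
  · have hmod := ((tendsto_one_sub_one_div_natCast.comp (tendsto_add_atTop_nat 1)).mul
      (tendsto_one_sub_one_div_natCast (𝕜 := ℂ)).star)
    have hphase : Tendsto (fun n : ℕ => exp (I * ↑(Real.log (n + 1) - Real.log n)))
        atTop (nhds 1) :=
      ((continuous_exp.comp (continuous_const.mul continuous_ofReal)).tendsto' 0 1 (by simp)).comp
        Real.tendsto_log_nat_add_one_sub_log
    simpa only [map_mul, mul_mul_mul_comm _ (exp _), exp_I_mul_ofReal_mul_conj, star_one,
      star_def, mul_one, Function.comp_def, Nat.cast_add, Nat.cast_one] using hmod.mul hphase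
end

section
/- Let a ∈ ℂ with 0 < |a| < 1, and let z = e^{iθ} with α ≤ θ ≤ 2π - α where cos(α/2) = √(1-|a|²), α ∈ (0,π). Then both roots z₁, z₂ of λ² - (z+1)λ + z(1-|a|²) = 0 satisfy |z₁| = |z₂| = √(1-|a|²). -/
/-!
Write `z = w²` with `w = e^{iθ/2}`, so that `z + 1 = 2 cos(θ/2) w`. Then `μ = z₁ / w` solves the
real quadratic `μ² - 2 cos(θ/2) μ + (1 - |a|²) = 0`, whose discriminant `cos²(θ/2) - cos²(α/2)` is
non-positive on the arc `α ≤ θ ≤ 2π - α`. Its roots are therefore complex conjugates of modulus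
`√(1 - |a|²)`, and `|z₁| = |μ|` because `|w| = 1`.
-/

open Complex

lemma norm_eq_sqrt_of_quadratic {c q : ℝ} (hcq : c ^ 2 ≤ q) {μ : ℂ}
    (h : μ ^ 2 - 2 * c * μ + q = 0) : ‖μ‖ = Real.sqrt q := by
  set t := Real.sqrt (q - c ^ 2)
  have ht : t ^ 2 = q - c ^ 2 := Real.sq_sqrt (sub_nonneg.mpr hcq)
  have hfactor : (μ - (c + t * I)) * (μ - (c + ((-t : ℝ) : ℂ) * I)) = 0 := by
    have htC : (t : ℂ) ^ 2 = q - c ^ 2 := by exact_mod_cast ht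
    push_cast
    linear_combination h + htC - t ^ 2 * I_sq
  have hnorm (s : ℝ) (hs : s ^ 2 = q - c ^ 2) : ‖(c : ℂ) + s * I‖ = Real.sqrt q := by
    rw [norm_def, normSq_add_mul_I, hs, add_sub_cancel]
  rcases mul_eq_zero.mp hfactor with h₁ | h₁
  · rw [sub_eq_zero.mp h₁, hnorm t ht]
  · rw [sub_eq_zero.mp h₁, hnorm (-t) (by rw [neg_sq, ht])]

lemma cos_half_sq_le_of_mem_arc {α θ : ℝ} (hα : 0 ≤ α) (hαθ : α ≤ θ)
    (hθα : θ ≤ 2 * Real.pi - α) : Real.cos (θ / 2) ^ 2 ≤ Real.cos (α / 2) ^ 2 := by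
  have hupper : Real.cos (θ / 2) ≤ Real.cos (α / 2) :=
    Real.cos_le_cos_of_nonneg_of_le_pi (by linarith) (by linarith) (by linarith)
  have hlower : -Real.cos (α / 2) ≤ Real.cos (θ / 2) := by
    rw [← Real.cos_pi_sub]
    exact Real.cos_le_cos_of_nonneg_of_le_pi (by linarith) (by linarith) (by linarith)
  exact sq_le_sq' hlower hupper

lemma exp_mul_I_add_one (θ : ℝ) :
    exp (θ * I) + 1 = 2 * Real.cos (θ / 2) * exp ((θ / 2 : ℝ) * I) := by
  have hsq : exp ((θ / 2 : ℝ) * I) * exp ((θ / 2 : ℝ) * I) = exp (θ * I) := by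
    rw [← exp_add]; push_cast; ring_nf
  have hinv : exp ((θ / 2 : ℝ) * I) * exp (-(θ / 2 : ℝ) * I) = 1 := by
    rw [← exp_add, ← add_mul, add_neg_cancel, zero_mul, exp_zero]
  rw [ofReal_cos, Complex.cos]
  linear_combination -hsq - hinv

theorem stmt5_general (a : ℂ)
    (α : ℝ) (hα : α ∈ Set.Ioo 0 Real.pi)
    (hcos : Real.cos (α / 2) = Real.sqrt (1 - ‖a‖ ^ 2))
    (θ : ℝ) (hθ : α ≤ θ ∧ θ ≤ 2 * Real.pi - α)
    (z : ℂ) (hz : z = Complex.exp (Complex.I * θ))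
    (z₁ : ℂ) (hroot : z₁ ^ 2 - (z + 1) * z₁ + z * (1 - (‖a‖ : ℂ) ^ 2) = 0) :
    ‖z₁‖ = Real.sqrt (1 - ‖a‖ ^ 2) := by
  set q : ℝ := 1 - ‖a‖ ^ 2
  set c : ℝ := Real.cos (θ / 2)
  set w : ℂ := exp ((θ / 2 : ℝ) * I)
  have hcos_pos : 0 < Real.cos (α / 2) :=
    Real.cos_pos_of_mem_Ioo ⟨by linarith [Real.pi_pos, hα.1], by linarith [hα.2]⟩
  have hq : 0 ≤ q := (Real.sqrt_pos.mp (hcos ▸ hcos_pos)).le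
  have hcq : c ^ 2 ≤ q := by
    simpa [hcos, Real.sq_sqrt hq] using cos_half_sq_le_of_mem_arc hα.1.le hθ.1 hθ.2
  have hw : w ≠ 0 := exp_ne_zero _
  have hwz : w ^ 2 = z := by
    rw [hz, ← exp_nat_mul, mul_comm I]; push_cast; ring_nf
  have hμ : (z₁ / w) ^ 2 - 2 * c * (z₁ / w) + q = 0 := by
    have hz1 : z + 1 = 2 * c * w := by rw [hz, mul_comm I]; exact exp_mul_I_add_one θ
    have hqC : (q : ℂ) = 1 - (‖a‖ : ℂ) ^ 2 := by simp [q]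
    field_simp
    linear_combination hroot + z₁ * hz1 + (1 - (‖a‖ : ℂ) ^ 2) * hwz + w ^ 2 * hqC
  rw [← div_mul_cancel₀ z₁ hw, norm_mul, norm_eq_sqrt_of_quadratic hcq hμ, norm_exp_ofReal_mul_I,
    mul_one]

theorem stmt5 (a : ℂ) (ha : 0 < ‖a‖) (ha1 : ‖a‖ < 1)
    (α : ℝ) (hα : α ∈ Set.Ioo 0 Real.pi)
    (hcos : Real.cos (α / 2) = Real.sqrt (1 - ‖a‖ ^ 2))
    (θ : ℝ) (hθ : α ≤ θ ∧ θ ≤ 2 * Real.pi - α)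
    (z : ℂ) (hz : z = Complex.exp (Complex.I * θ))
    (z₁ : ℂ) (hroot : z₁ ^ 2 - (z + 1) * z₁ + z * (1 - (‖a‖ : ℂ) ^ 2) = 0) :
    ‖z₁‖ = Real.sqrt (1 - ‖a‖ ^ 2) :=
  stmt5_general a α hα hcos θ hθ z hz z₁ hroot
end

section
/- Let μ be a probability measure on the unit circle with infinite support, let φ_n be the orthonormal polynomials, and suppose the derived set of supp(μ) equals {τ} for some τ on the unit circle. Then for every bounded μ-measurable function f on the unit circle that is continuous at τ, lim_{n→∞} ∫ f·|φ_n|² dμ = f(τ). -/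
/-!
Outside any neighbourhood of `τ` the support of `μ` is a finite set of atoms: an infinite part
would accumulate, by compactness of the circle, at a point other than `τ`. At an atom `z`,
Bessel's inequality for the indicator of `{z}`, whose Fourier coefficients are
`μ{z} · conj (φₙ z)`, gives `∑ μ{z}² |φₙ z|² ≤ μ{z}`, so `|φₙ z|² → 0`. Hence the probability
densities `|φₙ|²` tend to `0` uniformly on `supp μ` away from `τ`: they are peak functions at `τ`,
and integrating `f` against them gives `f τ` in the limit.
-/

open MeasureTheory Filter

/-- The (closed) support of a measure on `ℂ`: points all of whose neighborhoods
have positive measure. -/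
def measSupport (μ : Measure ℂ) : Set ℂ := {z : ℂ | ∀ U ∈ nhds z, 0 < μ U}

open scoped ComplexConjugate Topology

section OrthonormalSystem

variable {α ι : Type*} [MeasurableSpace α] [DecidableEq ι]

def IsOrthonormalSystem (μ : Measure α) (p : ι → α → ℂ) : Prop :=
  ∀ i j, ∫ x, p j x * conj (p i x) ∂μ = if i = j then 1 else 0

namespace IsOrthonormalSystem

variable {μ : Measure α} {p : ι → α → ℂ}

theorem integral_norm_sq (h : IsOrthonormalSystem μ p) (i : ι) :
    ∫ x, ‖p i x‖ ^ 2 ∂μ = 1 := by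
  have := h i i
  simp only [Complex.mul_conj', ← Complex.ofReal_pow, if_true] at this
  exact_mod_cast this

theorem integrable_norm_sq (h : IsOrthonormalSystem μ p) (i : ι) :
    Integrable (fun x => ‖p i x‖ ^ 2) μ :=
  .of_integral_ne_zero (by simp [h.integral_norm_sq i])

theorem memLp_two (h : IsOrthonormalSystem μ p) {i : ι} (hp : AEStronglyMeasurable (p i) μ) :
    MemLp (p i) 2 μ :=
  (memLp_two_iff_integrable_sq_norm hp).2 (h.integrable_norm_sq i)

theorem orthonormal_toLp (h : IsOrthonormalSystem μ p) (hp : ∀ i, AEStronglyMeasurable (p i) μ) :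
    Orthonormal ℂ fun i => (h.memLp_two (hp i)).toLp (p i) := by
  rw [orthonormal_iff_ite]
  intro i j
  rw [L2.inner_def, ← h i j]
  refine integral_congr_ae ?_
  filter_upwards [(h.memLp_two (hp i)).coeFn_toLp, (h.memLp_two (hp j)).coeFn_toLp]
    with x hi hj
  rw [hi, hj, RCLike.inner_apply, mul_comm]

theorem summable_norm_sq_of_measure_singleton_ne_zero [IsFiniteMeasure μ]
    [MeasurableSingletonClass α] (h : IsOrthonormalSystem μ p)
    (hp : ∀ i, AEStronglyMeasurable (p i) μ) {x : α} (hx : μ {x} ≠ 0) :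
    Summable fun i => ‖p i x‖ ^ 2 := by
  set e : Lp ℂ 2 μ := indicatorConstLp 2 (measurableSet_singleton x) (measure_ne_top μ _) 1
  have hcoeff : ∀ i, ‖inner ℂ ((h.memLp_two (hp i)).toLp (p i)) e‖ ^ 2
      = μ.real {x} ^ 2 * ‖p i x‖ ^ 2 := by
    intro i
    rw [← inner_conj_symm, RCLike.norm_conj, L2.inner_indicatorConstLp_one,
      integral_congr_ae (ae_restrict_of_ae (h.memLp_two (hp i)).coeFn_toLp), integral_singleton,
      norm_smul, mul_pow, Real.norm_of_nonneg measureReal_nonneg]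
  have hbessel := (h.orthonormal_toLp hp).inner_products_summable e
  simp only [hcoeff] at hbessel
  exact (summable_mul_left_iff (by simp [measureReal_def, ENNReal.toReal_eq_zero_iff, hx])).1
    hbessel

end IsOrthonormalSystem

end OrthonormalSystem

theorem measSupport_eq_support (μ : Measure ℂ) : measSupport μ = μ.support :=
  Set.ext fun z => (Measure.mem_support_iff_forall z).symm

section PeakAtUniqueAccumulationPoint

open Set

variable {X : Type*} [TopologicalSpace X]

theorem IsCompact.finite_diff_of_derivedSet_subset {s u : Set X} (hs : IsCompact s) (hu : IsOpen u)
    (hsu : derivedSet s ⊆ u) : (s \ u).Finite := by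
  by_contra hinf
  obtain ⟨x, -, hx⟩ := Set.Infinite.exists_accPt_of_subset_isCompact hinf hs sdiff_subset
  have hxu : x ∈ u := hsu (hx.mono (principal_mono.2 sdiff_subset))
  have hx_closure : x ∈ closure (s \ u) := mem_closure_iff_clusterPt.2 hx.clusterPt
  exact closure_minimal (sdiff_subset_compl s u) hu.isClosed_compl hx_closure hxu

variable [MeasurableSpace X] {μ : Measure X}

theorem MeasureTheory.Measure.measure_singleton_pos_of_notMem_derivedSet
    [HereditarilyLindelofSpace X] {x : X} (hx : x ∈ μ.support)
    (hx' : x ∉ derivedSet μ.support) : 0 < μ {x} := by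
  obtain ⟨U, hU, hUx⟩ : ∃ U ∈ 𝓝 x, ∀ y ∈ U ∩ μ.support, y = x := by
    simpa [mem_derivedSet, accPt_iff_nhds] using hx'
  have hU_sub : U ⊆ {x} ∪ μ.supportᶜ := fun y hy => by
    by_cases hys : y ∈ μ.support
    · exact Or.inl (hUx y ⟨hy, hys⟩)
    · exact Or.inr hys
  calc 0 < μ U := (Measure.mem_support_iff_forall x).1 hx U hU
    _ ≤ μ {x} + μ μ.supportᶜ := (measure_mono hU_sub).trans (measure_union_le _ _)
    _ = μ {x} := by rw [Measure.measure_compl_support, add_zero]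

theorem tendsto_integral_smul_of_derivedSet_support_subset_singleton [BorelSpace X]
    [HereditarilyLindelofSpace X] [IsFiniteMeasure μ] {E ι : Type*} [NormedAddCommGroup E]
    [NormedSpace ℝ E] [CompleteSpace E] {l : Filter ι} {w : ι → X → ℝ} {g : X → E} {τ : X}
    (hcpt : IsCompact μ.support) (hder : derivedSet μ.support ⊆ {τ})
    (hw_nonneg : ∀ i x, 0 ≤ w i x) (hw_meas : ∀ i, AEStronglyMeasurable (w i) μ)
    (hw_int : ∀ i, ∫ x, w i x ∂μ = 1)
    (hw_atom : ∀ x, μ {x} ≠ 0 → Tendsto (fun i => w i x) l (𝓝 0))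
    (hg : Integrable g μ) (hgτ : ContinuousAt g τ) :
    Tendsto (fun i => ∫ x, w i x • g x ∂μ) l (𝓝 (g τ)) := by
  have hrestrict : μ.restrict μ.support = μ :=
    Measure.restrict_eq_self_of_ae_mem Measure.support_mem_ae
  have hunif : ∀ u, IsOpen u → τ ∈ u → TendstoUniformlyOn w 0 l (μ.support \ u) := by
    intro u hu hτu
    have hfin := hcpt.finite_diff_of_derivedSet_subset hu (hder.trans (singleton_subset_iff.2 hτu))
    rw [Metric.tendstoUniformlyOn_iff]
    intro ε hε
    rw [eventually_all_finite hfin]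
    intro x hx
    have hatom : 0 < μ {x} := Measure.measure_singleton_pos_of_notMem_derivedSet hx.1
      fun hxd => hx.2 (mem_singleton_iff.1 (hder hxd) ▸ hτu)
    filter_upwards [(hw_atom x hatom.ne').eventually (Metric.ball_mem_nhds 0 hε)] with i hi
    simpa [dist_comm] using hi
  have hint : Tendsto (fun i => ∫ x in μ.support, w i x ∂μ) l (𝓝 1) := by
    simp only [hrestrict, hw_int, tendsto_const_nhds]
  have hsupp := (Measure.isClosed_support (μ := μ)).measurableSet
  simpa only [hrestrict] using tendsto_setIntegral_peak_smul_of_integrableOn_of_tendsto hsupp hsupp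
    subset_rfl self_mem_nhdsWithin (measure_ne_top _ _)
    (Eventually.of_forall fun i x _ => hw_nonneg i x) hunif hint
    (Eventually.of_forall fun i => (hw_meas i).restrict) hg.integrableOn
    (hgτ.tendsto.mono_left nhdsWithin_le_nhds)

end PeakAtUniqueAccumulationPoint

theorem stmt15_general (μ : Measure ℂ) [IsProbabilityMeasure μ]
    (hcirc : μ (Metric.sphere (0 : ℂ) 1)ᶜ = 0)
    (φ : ℕ → Polynomial ℂ)
    (horth : ∀ m n : ℕ,
      ∫ z, (φ n).eval z * (starRingEnd ℂ) ((φ m).eval z) ∂μ =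
        if m = n then 1 else 0)
    (τ : ℂ)
    (hder : {z : ℂ | AccPt z (Filter.principal (measSupport μ))} = {τ}) :
    ∀ f : ℂ → ℂ, AEStronglyMeasurable f μ →
      (∃ C : ℝ, ∀ z ∈ Metric.sphere (0 : ℂ) 1, ‖f z‖ ≤ C) →
      ContinuousAt f τ →
      Tendsto (fun n : ℕ => ∫ z, f z * (‖(φ n).eval z‖ ^ 2 : ℝ) ∂μ) atTop (nhds (f τ)) := by
  rintro f hf ⟨C, hC⟩ hfτ
  have horth : IsOrthonormalSystem μ fun n z => (φ n).eval z := horth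
  have hp : ∀ n, AEStronglyMeasurable (fun z => (φ n).eval z) μ :=
    fun n => (φ n).continuous.aestronglyMeasurable
  have hsphere : Metric.sphere (0 : ℂ) 1 ∈ ae μ := mem_ae_iff.2 hcirc
  have hcpt : IsCompact μ.support := (isCompact_sphere 0 1).of_isClosed_subset
    Measure.isClosed_support (Measure.support_subset_of_isClosed Metric.isClosed_sphere hsphere)
  have hfint : Integrable f μ := .of_bound hf C (Filter.mem_of_superset hsphere hC)
  rw [measSupport_eq_support] at hder
  simpa only [Complex.real_smul, mul_comm] using
    tendsto_integral_smul_of_derivedSet_support_subset_singleton hcpt hder.le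
      (fun n z => sq_nonneg _) (fun n => (hp n).norm.pow 2) horth.integral_norm_sq
      (fun z hz => (horth.summable_norm_sq_of_measure_singleton_ne_zero hp hz).tendsto_atTop_zero)
      hfint hfτ

theorem stmt15 (μ : Measure ℂ) [IsProbabilityMeasure μ]
    (hcirc : μ (Metric.sphere (0 : ℂ) 1)ᶜ = 0)
    (hinf : (measSupport μ).Infinite)
    (φ : ℕ → Polynomial ℂ)
    (hdeg : ∀ n, (φ n).natDegree = n)
    (hlead : ∀ n, 0 < ((φ n).leadingCoeff).re ∧ ((φ n).leadingCoeff).im = 0)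
    (horth : ∀ m n : ℕ,
      ∫ z, (φ n).eval z * (starRingEnd ℂ) ((φ m).eval z) ∂μ =
        if m = n then 1 else 0)
    (τ : ℂ) (hτ : ‖τ‖ = 1)
    (hder : {z : ℂ | AccPt z (Filter.principal (measSupport μ))} = {τ}) :
    ∀ f : ℂ → ℂ, AEStronglyMeasurable f μ →
      (∃ C : ℝ, ∀ z ∈ Metric.sphere (0 : ℂ) 1, ‖f z‖ ≤ C) →
      ContinuousAt f τ →
      Tendsto (fun n : ℕ => ∫ z, f z * (‖(φ n).eval z‖ ^ 2 : ℝ) ∂μ) atTop (nhds (f τ)) :=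
  stmt15_general μ hcirc φ horth τ hder
end

section
/- Let μ be a probability measure on the unit circle with orthonormal polynomials φ_n and suppose lim_{n→∞} ∫ z·|φ_n(z)|² dμ = τ for some τ with |τ| = 1. Then for every k ∈ ℤ, lim_{n→∞} ∫ z·φ_n(z)·conj(φ_{n+k}(z)) dμ = τ·δ_{0,k}. -/
/-!
Write `ε n = ∫ |z - τ|² |φ_n|² dμ`. Since `|z| = |τ| = 1` on the circle and `‖φ_n‖ = 1`,
`ε n = 2 - 2 Re (τ̄ ∫ z |φ_n|² dμ) → 0`. On the other hand, by orthonormality,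
`∫ z φ_n φ̄_{n+k} dμ - τ δ_{0,k} = ∫ (z - τ) φ_n φ̄_{n+k} dμ`, which Cauchy–Schwarz bounds by `√(ε n)`.
-/

open MeasureTheory Filter ComplexConjugate

section

variable {α 𝕜 : Type*} [MeasurableSpace α] {μ : Measure α} [RCLike 𝕜]

lemma memLp_two_norm_of_integrable_norm_sq {f : α → 𝕜}
    (hf : Integrable (fun x => ‖f x‖ ^ 2) μ) : MemLp (fun x => ‖f x‖) 2 μ := by
  have hmeas : AEStronglyMeasurable (fun x => ‖f x‖) μ :=
    (Real.continuous_sqrt.comp_aestronglyMeasurable hf.1).congr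
      (Eventually.of_forall fun x => Real.sqrt_sq (norm_nonneg (f x)))
  exact (memLp_two_iff_integrable_sq hmeas).2 hf

-- `f` and `g` need not be a.e.-measurable, but `‖f‖ = √(‖f‖ ^ 2)` and `‖g‖` are,
-- so Hölder applies to them.
lemma norm_integral_mul_le_sqrt_mul_sqrt {f g : α → 𝕜}
    (hf : Integrable (fun x => ‖f x‖ ^ 2) μ) (hg : Integrable (fun x => ‖g x‖ ^ 2) μ) :
    ‖∫ x, f x * g x ∂μ‖ ≤ √(∫ x, ‖f x‖ ^ 2 ∂μ) * √(∫ x, ‖g x‖ ^ 2 ∂μ) := by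
  have holder := integral_mul_norm_le_Lp_mul_Lq Real.HolderConjugate.two_two
    (by simpa using memLp_two_norm_of_integrable_norm_sq hf)
    (by simpa using memLp_two_norm_of_integrable_norm_sq hg)
  simp only [norm_norm, Real.rpow_two, ← Real.sqrt_eq_rpow] at holder
  calc ‖∫ x, f x * g x ∂μ‖ ≤ ∫ x, ‖f x * g x‖ ∂μ := norm_integral_le_integral_norm _
    _ = ∫ x, ‖f x‖ * ‖g x‖ ∂μ := by simp_rw [norm_mul]
    _ ≤ _ := holder

lemma integral_mul_conj_self (f : α → ℂ) :
    ∫ x, f x * conj (f x) ∂μ = ↑(∫ x, ‖f x‖ ^ 2 ∂μ) := by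
  simp_rw [Complex.mul_conj', ← Complex.ofReal_pow]
  exact integral_ofReal

end

lemma norm_sub_sq_of_norm_eq_one {z τ : ℂ} (hz : ‖z‖ = 1) (hτ : ‖τ‖ = 1) :
    ‖z - τ‖ ^ 2 = 2 - 2 * (conj τ * z).re := by
  rw [norm_sub_rev, @norm_sub_sq ℂ ℂ, hz, hτ, RCLike.inner_apply]
  norm_num
  ring

section UnitCircle

variable {μ : Measure ℂ}

lemma integrable_id_mul_iff (hμ : ∀ᵐ z ∂μ, ‖z‖ = 1) {f : ℂ → ℂ} :
    Integrable (fun z => z * f z) μ ↔ Integrable f μ := by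
  refine ⟨fun h => ?_, fun h => h.bdd_mul (c := 1) aestronglyMeasurable_id ?_⟩
  · refine (h.bdd_mul (c := 1) Complex.continuous_conj.aestronglyMeasurable ?_).congr ?_
    · filter_upwards [hμ] with z hz
      simp [hz]
    · filter_upwards [hμ] with z hz
      rw [← mul_assoc, Complex.conj_mul', hz]
      simp
  · filter_upwards [hμ] with z hz
    simp [hz]

lemma integral_norm_sub_sq_mul (hμ : ∀ᵐ z ∂μ, ‖z‖ = 1) {τ : ℂ} (hτ : ‖τ‖ = 1) {w : ℂ → ℝ}
    (hw : Integrable w μ) :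
    ∫ z, ‖z - τ‖ ^ 2 * w z ∂μ = 2 * ∫ z, w z ∂μ - 2 * (conj τ * ∫ z, z * (w z : ℂ) ∂μ).re := by
  have hzw : Integrable (fun z => conj τ * (z * (w z : ℂ))) μ :=
    ((integrable_id_mul_iff hμ).2 hw.ofReal).const_mul _
  calc ∫ z, ‖z - τ‖ ^ 2 * w z ∂μ
      = ∫ z, 2 * w z - 2 * (conj τ * (z * (w z : ℂ))).re ∂μ := by
        refine integral_congr_ae ?_
        filter_upwards [hμ] with z hz
        rw [norm_sub_sq_of_norm_eq_one hz hτ, ← mul_assoc, Complex.re_mul_ofReal]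
        ring
    _ = _ := by
        have hre : Integrable (fun z => (conj τ * (z * (w z : ℂ))).re) μ := hzw.re
        have hre_int : ∫ z, (conj τ * (z * (w z : ℂ))).re ∂μ
            = (∫ z, conj τ * (z * (w z : ℂ)) ∂μ).re := integral_re hzw
        rw [integral_sub (hw.const_mul 2) (hre.const_mul 2), integral_const_mul,
          integral_const_mul, hre_int, integral_const_mul]

lemma norm_integral_id_mul_mul_conj_sub_le (hμ : ∀ᵐ z ∂μ, ‖z‖ = 1) {f g : ℂ → ℂ}
    (hf : Integrable (fun z => ‖f z‖ ^ 2) μ) (hg : Integrable (fun z => ‖g z‖ ^ 2) μ) (τ : ℂ) :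
    ‖∫ z, z * f z * conj (g z) ∂μ - τ * ∫ z, f z * conj (g z) ∂μ‖
      ≤ √(∫ z, ‖z - τ‖ ^ 2 * ‖f z‖ ^ 2 ∂μ) * √(∫ z, ‖g z‖ ^ 2 ∂μ) := by
  by_cases hfg : Integrable (fun z => f z * conj (g z)) μ
  · have hzfg : Integrable (fun z => z * f z * conj (g z)) μ := by
      simpa only [mul_assoc] using (integrable_id_mul_iff hμ).2 hfg
    have hsub : ∫ z, z * f z * conj (g z) ∂μ - τ * ∫ z, f z * conj (g z) ∂μ
        = ∫ z, (z - τ) * f z * conj (g z) ∂μ := by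
      rw [← integral_const_mul, ← integral_sub hzfg (hfg.const_mul τ)]
      congr 1 with z
      ring
    have hτf : Integrable (fun z => ‖(z - τ) * f z‖ ^ 2) μ := by
      refine (hf.bdd_mul (f := fun z => ‖z - τ‖ ^ 2) (c := (1 + ‖τ‖) ^ 2) (by fun_prop)
        ?_).congr ?_
      · filter_upwards [hμ] with z hz
        rw [norm_pow, norm_norm, ← hz]
        gcongr
        exact norm_sub_le z τ
      · exact Eventually.of_forall fun z => by simp [mul_pow]
    have hg' : Integrable (fun z => ‖conj (g z)‖ ^ 2) μ := by simpa using hg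
    simpa [hsub, mul_pow] using norm_integral_mul_le_sqrt_mul_sqrt hτf hg'
  · have hzfg : ¬ Integrable (fun z => z * f z * conj (g z)) μ := by
      simpa [mul_assoc] using (integrable_id_mul_iff hμ).not.2 hfg
    rw [integral_undef hfg, integral_undef hzfg, mul_zero, sub_zero, norm_zero]
    positivity

end UnitCircle

theorem stmt17_general (μ : Measure ℂ)
    (hcirc : μ (Metric.sphere (0 : ℂ) 1)ᶜ = 0)
    (φ : ℕ → ℂ → ℂ)
    (horth : ∀ m n : ℕ,
      ∫ z, φ n z * (starRingEnd ℂ) (φ m z) ∂μ = if m = n then 1 else 0)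
    (τ : ℂ) (hτ : ‖τ‖ = 1)
    (hiv : Tendsto (fun n : ℕ => ∫ z, z * (‖φ n z‖ ^ 2 : ℝ) ∂μ) atTop (nhds τ)) :
    ∀ k : ℤ,
      Tendsto (fun n : ℕ => ∫ z, z * φ n z * (starRingEnd ℂ) (φ (((n : ℤ) + k).toNat) z) ∂μ)
        atTop (nhds (τ * if k = 0 then 1 else 0)) := by
  intro k
  have hμ : ∀ᵐ z ∂μ, ‖z‖ = 1 := by
    filter_upwards [ae_iff.2 hcirc] with z hz
    simpa using hz
  have hnorm (n : ℕ) : ∫ z, ‖φ n z‖ ^ 2 ∂μ = 1 := by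
    exact_mod_cast (integral_mul_conj_self (φ n)).symm.trans ((horth n n).trans (if_pos rfl))
  have hsq (n : ℕ) : Integrable (fun z => ‖φ n z‖ ^ 2) μ :=
    .of_integral_ne_zero (by simp [hnorm])
  have hdist : Tendsto (fun n => ∫ z, ‖z - τ‖ ^ 2 * ‖φ n z‖ ^ 2 ∂μ) atTop (nhds 0) := by
    have hcont : Continuous fun c : ℂ => 2 - 2 * (conj τ * c).re := by fun_prop
    have hlim : 2 - 2 * (conj τ * τ).re = 0 := by
      rw [Complex.conj_mul', hτ]
      norm_num
    refine (hlim ▸ (hcont.tendsto τ).comp hiv).congr fun n => ?_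
    rw [Function.comp_apply, integral_norm_sub_sq_mul hμ hτ (hsq n), hnorm n, mul_one]
  -- For `n ≥ |k|` the truncation in `Int.toNat` is inactive.
  have hkron : ∀ᶠ n in atTop,
      ∫ z, φ n z * conj (φ ((n + k).toNat) z) ∂μ = if k = 0 then 1 else 0 := by
    filter_upwards [eventually_ge_atTop k.natAbs] with n hn
    rw [horth]
    congr 1
    simp only [eq_iff_iff]
    omega
  rw [tendsto_iff_norm_sub_tendsto_zero]
  refine squeeze_zero_norm' ?_ (by simpa using hdist.sqrt)
  filter_upwards [hkron] with n hn
  have h := norm_integral_id_mul_mul_conj_sub_le hμ (hsq n) (hsq ((n + k).toNat)) τ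
  rwa [hn, hnorm, Real.sqrt_one, mul_one, ← norm_norm] at h

theorem stmt17 (μ : Measure ℂ) [IsProbabilityMeasure μ]
    (hcirc : μ (Metric.sphere (0 : ℂ) 1)ᶜ = 0)
    (φ : ℕ → ℂ → ℂ)
    (horth : ∀ m n : ℕ,
      ∫ z, φ n z * (starRingEnd ℂ) (φ m z) ∂μ = if m = n then 1 else 0)
    (τ : ℂ) (hτ : ‖τ‖ = 1)
    (hiv : Tendsto (fun n : ℕ => ∫ z, z * (‖φ n z‖ ^ 2 : ℝ) ∂μ) atTop (nhds τ)) :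
    ∀ k : ℤ,
      Tendsto (fun n : ℕ => ∫ z, z * φ n z * (starRingEnd ℂ) (φ (((n : ℤ) + k).toNat) z) ∂μ)
        atTop (nhds (τ * if k = 0 then 1 else 0)) :=
  stmt17_general μ hcirc φ horth τ hτ hiv
end
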